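/- Let H = (f, φ; g, ψ) with entries in L²(𝕋) and suppose R_H is bounded and positive (i.e. ⟨R_H x, x⟩ ≥ 0 for all x ∈ L²). Then f ≥ 0 almost everywhere, ψ ≥ 0 almost everywhere, and g − φ̄ ∈ H². -/

import Mathlib

open MeasureTheory AddCircle Filter Topology
open scoped ENNReal

noncomputable section

namespace GSIO

instance : Fact (0 < 2 * Real.pi) := ⟨by positivity⟩

/-- The unit circle, realized as `ℝ / 2πℤ`. -/
abbrev 𝕋 : Type := AddCircle (2 * Real.pi)

/-- Normalized Lebesgue (Haar) measure on the circle. -/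
abbrev μ : Measure 𝕋 := @haarAddCircle (2 * Real.pi) _

/-- `L²(𝕋)`. -/
abbrev L2 : Type := Lp ℂ 2 μ

/-- The embedding `𝕋 ⊆ ℂ`, `t ↦ e^{it}`. -/
def e : C(𝕋, ℂ) := ⟨fun t => (toCircle t : ℂ), continuous_induced_dom.comp continuous_toCircle⟩

/-- The Hardy space `H²`: the closed linear span of `{zⁿ : n ≥ 0}` in `L²`. -/
def H2 : Submodule ℂ L2 :=
  (Submodule.span ℂ (Set.range fun n : ℕ => (fourierLp 2 (n : ℤ) : L2))).topologicalClosure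

instance : CompleteSpace H2 :=
  (Submodule.isClosed_topologicalClosure _).completeSpace_coe

/-- The Riesz projection `P₊ : L² → H² ⊆ L²`. -/
def Pplus : L2 →L[ℂ] L2 := (H2.subtypeL).comp (H2.orthogonalProjectionOnto)

/-- `P₋ = I - P₊`. -/
def Pminus : L2 →L[ℂ] L2 := ContinuousLinearMap.id ℂ L2 - Pplus

/-- The GSIO defining relation `R x = P₊(f·P₊x) + P₋(g·P₊x) + P₊(φ·P₋x) + P₋(ψ·P₋x)`
at a point `x ∈ L²` (including the requirement that the four products lie in `L²`). -/
def gsioEq (R : L2 → L2) (f g φ ψ : 𝕋 → ℂ) (x : L2) : Prop :=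
  ∃ (h₁ : MemLp (f * ⇑(Pplus x)) 2 μ) (h₂ : MemLp (g * ⇑(Pplus x)) 2 μ)
    (h₃ : MemLp (φ * ⇑(Pminus x)) 2 μ) (h₄ : MemLp (ψ * ⇑(Pminus x)) 2 μ),
    R x = Pplus (h₁.toLp _) + Pminus (h₂.toLp _) + Pplus (h₃.toLp _) + Pminus (h₄.toLp _)

/-- `R` is the (bounded) generalized singular integral operator with
symbol matrix `(f, φ; g, ψ)`. -/
def IsGSIO (R : L2 →L[ℂ] L2) (f g φ ψ : 𝕋 → ℂ) : Prop := ∀ x : L2, gsioEq (⇑R) f g φ ψ x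

/-- Normalized reproducing kernel `k_z` of `H²`, as an element of `L²`. -/
def kern (z : ℂ) : L2 :=
  (Real.sqrt (1 - ‖z‖ ^ 2) : ℂ) • ∑' n : ℕ, (starRingEnd ℂ z) ^ n • (fourierLp 2 (n : ℤ) : L2)

/-- The unit vector `z̄k̄_z : w ↦ w̄ ⬝ conj (k_z w)` of `(H²)^⊥`, as an element of `L²`. -/
def kbar (z : ℂ) : L2 :=
  (Real.sqrt (1 - ‖z‖ ^ 2) : ℂ) • ∑' n : ℕ, z ^ n • (fourierLp 2 (-(n + 1) : ℤ) : L2)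

/-- `L∞(𝕋)`: essentially bounded (a.e. strongly measurable) functions. -/
def Linf : Set (𝕋 → ℂ) := {h | MemLp h ∞ μ}

/-- `C(𝕋)`: functions (a.e. equal to) continuous functions. -/
def CT : Set (𝕋 → ℂ) := {h | ∃ c : 𝕋 → ℂ, Continuous c ∧ h =ᵐ[μ] c}

/-- `H∞ = H² ∩ L∞`. -/
def Hinf : Set (𝕋 → ℂ) := {h | ∃ h2 : MemLp h 2 μ, h2.toLp h ∈ H2 ∧ MemLp h ∞ μ}

/-- `H∞ + C(𝕋)`. -/
def HinfC : Set (𝕋 → ℂ) := {h | ∃ a ∈ Hinf, ∃ c ∈ CT, h =ᵐ[μ] a + c}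

/-- The quasicontinuous functions `QC = (H∞ + C) ∩ conj (H∞ + C)`. -/
def QC : Set (𝕋 → ℂ) := {h | h ∈ HinfC ∧ star h ∈ HinfC}

/-- The set of GSIOs with all four symbols in `S`. -/
def gsioSet (S : Set (𝕋 → ℂ)) : Set (L2 →L[ℂ] L2) :=
  {R | ∃ f g φ ψ : 𝕋 → ℂ, f ∈ S ∧ g ∈ S ∧ φ ∈ S ∧ ψ ∈ S ∧ IsGSIO R f g φ ψ}

/-- The C*-algebra `𝔑_S` generated by the GSIOs with symbols in `S`. -/
def NAlg (S : Set (𝕋 → ℂ)) : StarSubalgebra ℂ (L2 →L[ℂ] L2) :=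
  (StarAlgebra.adjoin ℂ (gsioSet S)).topologicalClosure

/-- Generators `R_{H₁} R_{H₂} - R_K` of the semicommutator ideal. -/
def semiGen (S : Set (𝕋 → ℂ)) : Set (L2 →L[ℂ] L2) :=
  {T | ∃ f₁ g₁ φ₁ ψ₁ f₂ g₂ φ₂ ψ₂ g φ : 𝕋 → ℂ,
      f₁ ∈ S ∧ g₁ ∈ S ∧ φ₁ ∈ S ∧ ψ₁ ∈ S ∧ f₂ ∈ S ∧ g₂ ∈ S ∧ φ₂ ∈ S ∧ ψ₂ ∈ S ∧
      g ∈ S ∧ φ ∈ S ∧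
      ∃ R₁ R₂ RK : L2 →L[ℂ] L2, IsGSIO R₁ f₁ g₁ φ₁ ψ₁ ∧ IsGSIO R₂ f₂ g₂ φ₂ ψ₂ ∧
        IsGSIO RK (f₁ * f₂) g φ (ψ₁ * ψ₂) ∧ T = R₁ * R₂ - RK}

/-- The closed two-sided ideal `𝔖𝔑_S` of `𝔑_S` generated by the semicommutators. -/
def SemiIdeal (S : Set (𝕋 → ℂ)) : Set (L2 →L[ℂ] L2) :=
  closure (AddSubgroup.closure
    {T | ∃ a b t : L2 →L[ℂ] L2, a ∈ NAlg S ∧ b ∈ NAlg S ∧ t ∈ semiGen S ∧ T = a * t * b} :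
      Set (L2 →L[ℂ] L2))

/-- Fredholm: closed range and finite-dimensional kernel and cokernel. -/
def IsFredholm (T : L2 →L[ℂ] L2) : Prop :=
  FiniteDimensional ℂ (LinearMap.ker (T : L2 →ₗ[ℂ] L2)) ∧
  FiniteDimensional ℂ (L2 ⧸ LinearMap.range (T : L2 →ₗ[ℂ] L2)) ∧
  IsClosed (LinearMap.range (T : L2 →ₗ[ℂ] L2) : Set L2)

/-- Fredholm index `ind T = dim ker T - dim ker T*`. -/
def ind (T : L2 →L[ℂ] L2) : ℤ :=
  (Module.finrank ℂ (LinearMap.ker (T : L2 →ₗ[ℂ] L2)) : ℤ) -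
    (Module.finrank ℂ (LinearMap.ker (ContinuousLinearMap.adjoint T : L2 →ₗ[ℂ] L2)) : ℤ)

/-- Essential spectrum (spectrum in the Calkin algebra, via Atkinson's theorem). -/
def essSpectrum (T : L2 →L[ℂ] L2) : Set ℂ := {z | ¬ IsFredholm (T - z • 1)}

/-- Essential norm: distance to the compact operators. -/
def essNorm (T : L2 →L[ℂ] L2) : ℝ :=
  sInf ((fun K => ‖T + K‖) '' {K : L2 →L[ℂ] L2 | IsCompactOperator K})

/-- Essential range of a measurable function. -/
def essRange (f : 𝕋 → ℂ) : Set ℂ := {c | ∀ ε > 0, μ {t | dist (f t) c < ε} ≠ 0}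

/-- `a` has winding number `w` about the origin, via a continuous argument lift. -/
def HasWindingNumber (a : C(𝕋, ℂ)) (w : ℤ) : Prop :=
  ∃ θ : ℝ → ℝ, ContinuousOn θ (Set.Icc 0 (2 * Real.pi)) ∧
    (∀ t ∈ Set.Icc 0 (2 * Real.pi),
      a (t : 𝕋) = (‖a (t : 𝕋)‖ : ℂ) * Complex.exp (θ t * Complex.I)) ∧
    θ (2 * Real.pi) - θ 0 = 2 * Real.pi * w

/-- The constant function `1` in `L²`. -/
def one2 : L2 := MemLp.toLp (fun _ => (1 : ℂ)) (memLp_const 1)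

/-- The rank-one operator `1 ⊗ 1 : x ↦ ⟨x,1⟩·1`. -/
def oneProj : L2 →L[ℂ] L2 := (innerSL ℂ one2).smulRight one2

/-- The Hilbert transform `ℍ = P₊ - P₋ - 1⊗1`. -/
def hilbertT : L2 →L[ℂ] L2 := Pplus - Pminus - oneProj

/-- `BMO(𝕋) = L∞ + ℍ L∞`, as a subset of `L²`. -/
def BMO2 : Set L2 := {x | ∃ a b : L2, ⇑a ∈ Linf ∧ ⇑b ∈ Linf ∧ x = a + hilbertT b}

/-- `⋂_{p ≥ 1} L^p(𝕋)`. -/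
def Lfin : Set (𝕋 → ℂ) := {h | ∀ p : ℝ, 1 ≤ p → MemLp h (ENNReal.ofReal p) μ}

/-- The GSIO relation for a map defined on functions (rather than on `L²`). -/
def gsioEqF (R : (𝕋 → ℂ) → (𝕋 → ℂ)) (f g φ ψ : 𝕋 → ℂ) (x : 𝕋 → ℂ) : Prop :=
  ∃ (hx : MemLp x 2 μ)
    (h₁ : MemLp (f * ⇑(Pplus (hx.toLp x))) 2 μ) (h₂ : MemLp (g * ⇑(Pplus (hx.toLp x))) 2 μ)
    (h₃ : MemLp (φ * ⇑(Pminus (hx.toLp x))) 2 μ) (h₄ : MemLp (ψ * ⇑(Pminus (hx.toLp x))) 2 μ),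
    R x =ᵐ[μ] ⇑(Pplus (h₁.toLp _) + Pminus (h₂.toLp _) + Pplus (h₃.toLp _) + Pminus (h₄.toLp _))

/-- Distance in `L∞` from a function to `H∞`. -/
def distHinfF (a : 𝕋 → ℂ) : ℝ :=
  sInf {r : ℝ | ∃ h ∈ Hinf, r = (eLpNorm (a - h) ∞ μ).toReal}

end GSIO

namespace GSIO

/-- The radial-limit function of `T` along the reproducing kernels `k_{rξ}` is `f`:
`lim_{r→1⁻} ⟨T k_{rξ}, k_{rξ}⟩ = f ξ` for a.e. `ξ` (inner products in the Mathlib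
convention, conjugate-linear in the first variable). -/
def symbPlus (T : L2 → L2) (f : 𝕋 → ℂ) : Prop :=
  ∀ᵐ ξ ∂μ, Tendsto
    (fun r : ℝ => (inner ℂ (kern ((r : ℂ) * e ξ)) (T (kern ((r : ℂ) * e ξ))) : ℂ))
    (𝓝[<] (1 : ℝ)) (𝓝 (f ξ))

/-- The radial-limit function of `T` along the vectors `z̄k̄_{rξ}` is `ψ`:
`lim_{r→1⁻} ⟨T z̄k̄_{rξ}, z̄k̄_{rξ}⟩ = ψ ξ` for a.e. `ξ`. -/
def symbMinus (T : L2 → L2) (ψ : 𝕋 → ℂ) : Prop :=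
  ∀ᵐ ξ ∂μ, Tendsto
    (fun r : ℝ => (inner ℂ (kbar ((r : ℂ) * e ξ)) (T (kbar ((r : ℂ) * e ξ))) : ℂ))
    (𝓝[<] (1 : ℝ)) (𝓝 (ψ ξ))

/-- `ρ(T) = (f, ψ)`: the pair of radial-limit symbol functions of `T`, in `L∞ ⊕ L∞`. -/
def HasSymbol (T : L2 →L[ℂ] L2) (f ψ : 𝕋 → ℂ) : Prop :=
  f ∈ Linf ∧ ψ ∈ Linf ∧ symbPlus (⇑T) f ∧ symbMinus (⇑T) ψ

end GSIO

/-!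
On `H²` the operator `R` is the compression of multiplication by `f`, and on `(H²)ᗮ` that of
multiplication by `ψ`. Testing positivity on `p = ∑_{j<N} e^{-ijt} z^{j+c}` gives
`⟪p, R p⟫ = ∑_{j,k<N} f̂(j-k) e^{i(j-k)t}`, which is `N` times the Fejér mean of `f` at `t`
(of `ψ` when `c = -N`, so that `p ∈ (H²)ᗮ`); since Fejér means converge to `f` in `L²`, `f ≥ 0`
and likewise `ψ ≥ 0` a.e. Positivity also makes `R` symmetric, and for `n < 0` comparing
`⟪zⁿ, R 1⟫ = ĝ(n)` with `⟪1, R zⁿ⟫ = φ̂(-n)` shows that the negative Fourier coefficients of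
`g - φ̄` vanish.
-/

open Finset ComplexConjugate
open scoped ComplexOrder InnerProductSpace

lemma ContinuousLinearMap.isPositive_of_inner_nonneg {E : Type*} [NormedAddCommGroup E]
    [InnerProductSpace ℂ E] {A : E →L[ℂ] E} (h : ∀ x, 0 ≤ ⟪A x, x⟫_ℂ) : A.IsPositive :=
  (isPositive_iff A).2
    ⟨(LinearMap.isSymmetric_iff_inner_map_self_real _).2 fun x => (h x).isSelfAdjoint, h⟩

section Fourier

variable {T : ℝ} [Fact (0 < T)]

lemma inner_fourierLp (F : Lp ℂ 2 (@haarAddCircle T _)) (n : ℤ) :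
    ⟪fourierLp 2 n, F⟫_ℂ = fourierCoeff F n := by
  rw [← fourierBasis_repr, fourierBasis.repr_apply_apply, coe_fourierBasis]

lemma fourierCoeff_mul_fourier (w : AddCircle T → ℂ) (m n : ℤ) :
    fourierCoeff (fun t => fourier m t * w t) n = fourierCoeff w (n - m) := by
  simp only [fourierCoeff, smul_eq_mul]
  congr 1 with t
  rw [neg_sub, sub_eq_add_neg, fourier_add]
  ring

lemma fourierCoeff_mul_fourierLp (w : AddCircle T → ℂ) (m n : ℤ) :
    fourierCoeff (w * ⇑(fourierLp 2 m)) n = fourierCoeff w (n - m) := by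
  have hae : w * ⇑(fourierLp 2 m) =ᵐ[haarAddCircle] fun t => fourier m t * w t := by
    filter_upwards [coeFn_fourierLp 2 m] with t ht
    rw [Pi.mul_apply, ht, mul_comm]
  rw [fourierCoeff_congr_ae hae, fourierCoeff_mul_fourier]

lemma fourierCoeff_star (w : AddCircle T → ℂ) (n : ℤ) :
    fourierCoeff (star w) n = conj (fourierCoeff w (-n)) := by
  simp only [fourierCoeff, ← integral_conj, smul_eq_mul, map_mul, neg_neg, Pi.star_apply,
    ← fourier_neg, Complex.star_def]

lemma fourierCoeff_sub {v w : AddCircle T → ℂ} (hv : Integrable v haarAddCircle)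
    (hw : Integrable w haarAddCircle) :
    fourierCoeff (v - w) = fourierCoeff v - fourierCoeff w := by
  rw [sub_eq_add_neg, fourierCoeff.add hv hw.neg, sub_eq_add_neg]
  ext n
  simpa using fourierCoeff.const_smul w (-1) n

lemma sum_smul_fourierLp {ι : Type*} (s : Finset ι) (a : ι → ℂ) (n : ι → ℤ) :
    ∑ i ∈ s, a i • fourierLp 2 (n i) =
      ContinuousMap.toLp 2 (@haarAddCircle T _) ℂ (∑ i ∈ s, a i • fourier (n i)) := by
  simp [fourierLp, map_sum, map_smul]

end Fourier

section Fejer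

variable {T : ℝ} [Fact (0 < T)]

lemma sum_range_add_sum_range_eq_sum_Icc {M : Type*} [AddCommMonoid M] (F : ℤ → M) (N : ℕ) :
    ∑ k ∈ range (N + 1), F (N - k) + ∑ j ∈ range N, F (j - N) =
      ∑ m ∈ Icc (-(N : ℤ)) N, F m := by
  have hsplit : Icc (-(N : ℤ)) N = Icc 0 (N : ℤ) ∪ Ico (-(N : ℤ)) 0 := by
    ext m; simp only [mem_Icc, mem_union, mem_Ico]; omega
  have hdisj : Disjoint (Icc 0 (N : ℤ)) (Ico (-(N : ℤ)) 0) := by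
    rw [disjoint_left]; intro m; simp only [mem_Icc, mem_Ico]; omega
  rw [hsplit, sum_union hdisj]
  congr 1
  · refine sum_nbij' (fun k => N - k) (fun m => (N - m).toNat) ?_ ?_ ?_ ?_ (fun _ _ => rfl) <;>
      intro x hx <;> simp only [mem_range, mem_Icc] at hx ⊢ <;> omega
  · refine sum_nbij' (fun j => j - N) (fun m => (m + N).toNat) ?_ ?_ ?_ ?_ (fun _ _ => rfl) <;>
      intro x hx <;> simp only [mem_range, mem_Ico] at hx ⊢ <;> omega

lemma sum_range_sum_range_sub {M : Type*} [AddCommMonoid M] (F : ℤ → M) (N : ℕ) :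
    ∑ j ∈ range N, ∑ k ∈ range N, F (j - k) = ∑ k ∈ range N, ∑ m ∈ Icc (-(k : ℤ)) k, F m := by
  induction N with
  | zero => simp
  | succ N ih =>
    rw [sum_range_succ (fun j => ∑ k ∈ range (N + 1), F (j - k)),
      sum_range_succ (fun k => ∑ m ∈ Icc (-(k : ℤ)) k, F m), ← ih,
      ← sum_range_add_sum_range_eq_sum_Icc, ← add_assoc, add_right_comm, ← sum_add_distrib]
    simp only [sum_range_succ (fun k => F (_ - k)) N]

def fourierPartialSum (w : AddCircle T → ℂ) (k : ℕ) : C(AddCircle T, ℂ) :=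
  ∑ m ∈ Icc (-(k : ℤ)) k, fourierCoeff w m • fourier m

def fejerMean (w : AddCircle T → ℂ) (N : ℕ) : C(AddCircle T, ℂ) :=
  (N : ℝ)⁻¹ • ∑ k ∈ range N, fourierPartialSum w k

def fejerSum (w : AddCircle T → ℂ) (N : ℕ) (t : AddCircle T) : ℂ :=
  ∑ j ∈ range N, ∑ k ∈ range N, fourierCoeff w (j - k) * fourier (j - k) t

lemma fejerMean_apply (w : AddCircle T → ℂ) (N : ℕ) (t : AddCircle T) :
    fejerMean w N t = (N : ℝ)⁻¹ • fejerSum w N t := by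
  simp only [fejerMean, fourierPartialSum, fejerSum, sum_range_sum_range_sub
    (fun m => fourierCoeff w m * fourier m t), ContinuousMap.smul_apply,
    ContinuousMap.sum_apply, smul_eq_mul]

lemma tendsto_toLp_fourierPartialSum (F : Lp ℂ 2 (@haarAddCircle T _)) :
    Tendsto (fun k => ContinuousMap.toLp 2 haarAddCircle ℂ (fourierPartialSum F k)) atTop
      (𝓝 F) := by
  have hIcc : Tendsto (fun k : ℕ => Icc (-(k : ℤ)) k) atTop atTop :=
    tendsto_atTop_finset_of_monotone (fun _ _ h => Icc_subset_Icc (by omega) (by omega))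
      fun m => ⟨m.natAbs, by simp only [mem_Icc]; omega⟩
  simpa [fourierPartialSum, fourierLp, map_sum, Function.comp_def] using
    (hasSum_fourier_series_L2 F).comp hIcc

lemma tendsto_toLp_fejerMean (F : Lp ℂ 2 (@haarAddCircle T _)) :
    Tendsto (fun N => ContinuousMap.toLp 2 haarAddCircle ℂ (fejerMean F N)) atTop (𝓝 F) := by
  simpa [fejerMean, map_sum, LinearMap.map_smul_of_tower] using
    (tendsto_toLp_fourierPartialSum F).cesaro_smul

lemma ae_nonneg_of_fejerSum_nonneg {w : AddCircle T → ℂ} (hw : MemLp w 2 haarAddCircle)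
    (h : ∀ N t, 0 ≤ fejerSum w N t) : ∀ᵐ t ∂haarAddCircle, 0 ≤ w t := by
  have hmean : ∀ N t, 0 ≤ fejerMean w N t := fun N t => by
    rw [fejerMean_apply]; exact smul_nonneg (by positivity) (h N t)
  have hF : fejerMean (hw.toLp w) = fejerMean w := by
    unfold fejerMean fourierPartialSum
    rw [fourierCoeff_congr_ae hw.coeFn_toLp]
  obtain ⟨ns, -, hae⟩ := (tendstoInMeasure_of_tendsto_Lp
    (hF ▸ tendsto_toLp_fejerMean (hw.toLp w))).exists_seq_tendsto_ae
  have hcoe : ∀ᵐ t ∂haarAddCircle, ∀ N, ContinuousMap.toLp 2 haarAddCircle ℂ (fejerMean w N) t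
      = fejerMean w N t := ae_all_iff.2 fun N => ContinuousMap.coeFn_toLp _ _
  filter_upwards [hae, hcoe, hw.coeFn_toLp] with t hlim hN hwt
  rw [← hwt]
  refine ge_of_tendsto' hlim fun i => ?_
  rw [hN]
  exact hmean _ t

end Fejer

section ToeplitzForm

variable {T : ℝ} [Fact (0 < T)]

def fejerPoly (t : AddCircle T) (N : ℕ) (c : ℤ) : Lp ℂ 2 (@haarAddCircle T _) :=
  ∑ j ∈ range N, fourier (-(j : ℤ)) t • fourierLp 2 (j + c)

lemma coeFn_fejerPoly (t : AddCircle T) (N : ℕ) (c : ℤ) :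
    fejerPoly t N c =ᵐ[haarAddCircle]
      fun s => ∑ k ∈ range N, fourier (-(k : ℤ)) t * fourier (k + c) s := by
  rw [fejerPoly, sum_smul_fourierLp]
  refine (ContinuousMap.coeFn_toLp _ _).trans (.of_forall fun s => ?_)
  simp only [ContinuousMap.sum_apply, ContinuousMap.smul_apply, smul_eq_mul]

lemma fourierCoeff_mul_fejerPoly {w : AddCircle T → ℂ} (hw : Integrable w haarAddCircle)
    (t : AddCircle T) (N : ℕ) (c m : ℤ) :
    fourierCoeff (w * ⇑(fejerPoly t N c)) m =
      ∑ k ∈ range N, fourier (-(k : ℤ)) t * fourierCoeff w (m - (k + c)) := by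
  have hae : w * ⇑(fejerPoly t N c) =ᵐ[haarAddCircle]
      ∑ k ∈ range N, fun s => fourier (-(k : ℤ)) t * (fourier (k + c) s * w s) := by
    filter_upwards [coeFn_fejerPoly t N c] with s hs
    simp only [Pi.mul_apply, hs, Finset.sum_apply, mul_sum]
    exact sum_congr rfl fun k _ => by ring
  rw [fourierCoeff_congr_ae hae, fourierCoeff.sum]
  · simp only [Finset.sum_apply, fourierCoeff.const_mul, fourierCoeff_mul_fourier]
  · exact fun k _ => (hw.fourier_smul _).const_mul _

lemma inner_fejerPoly {w : AddCircle T → ℂ} (hw : Integrable w haarAddCircle)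
    {t : AddCircle T} {N : ℕ} {c : ℤ} (F : Lp ℂ 2 (@haarAddCircle T _))
    (hF : F =ᵐ[haarAddCircle] w * ⇑(fejerPoly t N c)) :
    ⟪fejerPoly t N c, F⟫_ℂ = fejerSum w N t := by
  rw [fejerPoly]
  simp only [sum_inner, inner_smul_left, inner_fourierLp, fourierCoeff_congr_ae hF,
    fourierCoeff_mul_fejerPoly hw, fejerSum, mul_sum]
  refine sum_congr rfl fun j _ => sum_congr rfl fun k _ => ?_
  rw [show (j : ℤ) + c - (k + c) = j - k by ring, fourier_neg, Complex.conj_conj,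
    sub_eq_add_neg, fourier_add]
  ring

end ToeplitzForm

namespace GSIO

lemma Pplus_eq_starProjection : Pplus = H2.starProjection := rfl

lemma Pminus_eq_starProjection : Pminus = H2ᗮ.starProjection :=
  (H2.starProjection_orthogonal).symm

lemma Pplus_eq_self {x : L2} (hx : x ∈ H2) : Pplus x = x :=
  Submodule.starProjection_eq_self_iff.2 hx

lemma Pplus_eq_zero {x : L2} (hx : x ∈ H2ᗮ) : Pplus x = 0 :=
  (Submodule.starProjection_apply_eq_zero_iff _).2 hx

lemma Pminus_eq_self {x : L2} (hx : x ∈ H2ᗮ) : Pminus x = x := by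
  rw [Pminus_eq_starProjection]; exact Submodule.starProjection_eq_self_iff.2 hx

lemma Pminus_eq_zero {x : L2} (hx : x ∈ H2) : Pminus x = 0 := by
  rw [Pminus_eq_starProjection]
  exact (Submodule.starProjection_apply_eq_zero_iff _).2 (Submodule.le_orthogonal_orthogonal _ hx)

lemma inner_Pplus_add_Pminus_of_mem {y : L2} (hy : y ∈ H2) (A B : L2) :
    ⟪y, Pplus A + Pminus B⟫_ℂ = ⟪y, A⟫_ℂ := by
  rw [inner_add_right, Pplus_eq_starProjection, Pminus_eq_starProjection,
    ← Submodule.inner_starProjection_left_eq_right, Submodule.starProjection_eq_self_iff.2 hy,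
    Submodule.inner_right_of_mem_orthogonal hy (H2ᗮ.starProjection_apply_mem B), add_zero]

lemma inner_Pplus_add_Pminus_of_mem_orthogonal {y : L2} (hy : y ∈ H2ᗮ) (A B : L2) :
    ⟪y, Pplus A + Pminus B⟫_ℂ = ⟪y, B⟫_ℂ := by
  rw [inner_add_right, Pplus_eq_starProjection, Pminus_eq_starProjection,
    Submodule.inner_left_of_mem_orthogonal (H2.starProjection_apply_mem A) hy,
    ← Submodule.inner_starProjection_left_eq_right, Submodule.starProjection_eq_self_iff.2 hy,
    zero_add]

lemma fourierLp_mem_H2 {n : ℤ} (hn : 0 ≤ n) : (fourierLp 2 n : L2) ∈ H2 :=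
  Submodule.le_topologicalClosure _ <|
    Submodule.subset_span ⟨n.toNat, by simp only [Int.toNat_of_nonneg hn]⟩

lemma fourierLp_mem_orthogonal {n : ℤ} (hn : n < 0) : (fourierLp 2 n : L2) ∈ H2ᗮ := by
  have hle : H2 ≤ (ℂ ∙ (fourierLp 2 n : L2))ᗮ := by
    refine Submodule.topologicalClosure_minimal _ ?_ (Submodule.isClosed_orthogonal _)
    rw [Submodule.span_le]
    rintro - ⟨m, rfl⟩
    exact Submodule.mem_orthogonal_singleton_iff_inner_right.2
      (orthonormal_fourier.inner_eq_zero (by omega))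
  exact Submodule.orthogonal_le hle
    (Submodule.le_orthogonal_orthogonal _ (Submodule.mem_span_singleton_self _))

lemma mem_H2_of_fourierCoeff {x : L2} (h : ∀ n < 0, fourierCoeff x n = 0) : x ∈ H2 := by
  refine (Submodule.isClosed_topologicalClosure _).mem_of_tendsto (hasSum_fourier_series_L2 x)
    (.of_forall fun s => Submodule.sum_mem _ fun n _ => ?_)
  rcases lt_or_ge n 0 with hn | hn
  · simp [h n hn]
  · exact Submodule.smul_mem _ _ (fourierLp_mem_H2 hn)

lemma fejerPoly_mem_H2 (t : 𝕋) (N : ℕ) {c : ℤ} (hc : 0 ≤ c) : fejerPoly t N c ∈ H2 :=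
  Submodule.sum_mem _ fun _ _ => Submodule.smul_mem _ _ (fourierLp_mem_H2 (by omega))

lemma fejerPoly_mem_orthogonal (t : 𝕋) (N : ℕ) {c : ℤ} (hc : c + N ≤ 0) :
    fejerPoly t N c ∈ H2ᗮ :=
  Submodule.sum_mem _ fun j hj =>
    Submodule.smul_mem _ _ (fourierLp_mem_orthogonal (by rw [mem_range] at hj; omega))

lemma toLp_mul_coeFn_zero {v : 𝕋 → ℂ} (h : MemLp (v * ⇑(0 : L2)) 2 μ) : h.toLp _ = 0 := by
  rw [MemLp.toLp_congr h MemLp.zero (by filter_upwards [Lp.coeFn_zero ℂ 2 μ] with t ht; simp),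
    MemLp.toLp_zero]

variable {R : L2 →L[ℂ] L2} {f g φ ψ : 𝕋 → ℂ}

lemma IsGSIO.apply_of_mem_H2 (hR : IsGSIO R f g φ ψ) {x : L2} (hx : x ∈ H2) :
    ∃ (hf : MemLp (f * ⇑x) 2 μ) (hg : MemLp (g * ⇑x) 2 μ),
      R x = Pplus (hf.toLp _) + Pminus (hg.toLp _) := by
  have hRx := hR x
  rw [gsioEq, Pplus_eq_self hx, Pminus_eq_zero hx] at hRx
  obtain ⟨hf, hg, _, _, hRx⟩ := hRx
  rw [toLp_mul_coeFn_zero, toLp_mul_coeFn_zero, map_zero, map_zero, add_zero, add_zero] at hRx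
  exact ⟨hf, hg, hRx⟩

lemma IsGSIO.apply_of_mem_orthogonal (hR : IsGSIO R f g φ ψ) {x : L2} (hx : x ∈ H2ᗮ) :
    ∃ (hφ : MemLp (φ * ⇑x) 2 μ) (hψ : MemLp (ψ * ⇑x) 2 μ),
      R x = Pplus (hφ.toLp _) + Pminus (hψ.toLp _) := by
  have hRx := hR x
  rw [gsioEq, Pplus_eq_zero hx, Pminus_eq_self hx] at hRx
  obtain ⟨_, _, hφ, hψ, hRx⟩ := hRx
  rw [toLp_mul_coeFn_zero, toLp_mul_coeFn_zero, map_zero, map_zero, zero_add, zero_add] at hRx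
  exact ⟨hφ, hψ, hRx⟩

lemma IsGSIO.fejerSum_f_nonneg (hR : IsGSIO R f g φ ψ) (hRpos : R.IsPositive)
    (hf : Integrable f μ) (N : ℕ) (t : 𝕋) : 0 ≤ fejerSum f N t := by
  have hp := fejerPoly_mem_H2 t N le_rfl
  obtain ⟨hfp, _, hRp⟩ := hR.apply_of_mem_H2 hp
  simpa only [hRp, inner_Pplus_add_Pminus_of_mem hp, inner_fejerPoly hf _ hfp.coeFn_toLp] using
    hRpos.inner_nonneg_right (fejerPoly t N 0)

lemma IsGSIO.fejerSum_ψ_nonneg (hR : IsGSIO R f g φ ψ) (hRpos : R.IsPositive)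
    (hψ : Integrable ψ μ) (N : ℕ) (t : 𝕋) : 0 ≤ fejerSum ψ N t := by
  have hp := fejerPoly_mem_orthogonal t N (c := -N) (by omega)
  obtain ⟨_, hψp, hRp⟩ := hR.apply_of_mem_orthogonal hp
  simpa only [hRp, inner_Pplus_add_Pminus_of_mem_orthogonal hp,
    inner_fejerPoly hψ _ hψp.coeFn_toLp] using hRpos.inner_nonneg_right (fejerPoly t N (-N))

lemma IsGSIO.fourierCoeff_g_eq_conj_φ (hR : IsGSIO R f g φ ψ) (hRpos : R.IsPositive)
    {n : ℤ} (hn : n < 0) : fourierCoeff g n = conj (fourierCoeff φ (-n)) := by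
  have hu : (fourierLp 2 0 : L2) ∈ H2 := fourierLp_mem_H2 le_rfl
  have hv : (fourierLp 2 n : L2) ∈ H2ᗮ := fourierLp_mem_orthogonal hn
  obtain ⟨_, hgu, hRu⟩ := hR.apply_of_mem_H2 hu
  obtain ⟨hφv, _, hRv⟩ := hR.apply_of_mem_orthogonal hv
  have hg : ⟪fourierLp 2 n, R (fourierLp 2 0)⟫_ℂ = fourierCoeff g n := by
    rw [hRu, inner_Pplus_add_Pminus_of_mem_orthogonal hv, inner_fourierLp,
      fourierCoeff_congr_ae hgu.coeFn_toLp, fourierCoeff_mul_fourierLp, sub_zero]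
  have hφ : ⟪fourierLp 2 0, R (fourierLp 2 n)⟫_ℂ = fourierCoeff φ (-n) := by
    rw [hRv, inner_Pplus_add_Pminus_of_mem hu, inner_fourierLp,
      fourierCoeff_congr_ae hφv.coeFn_toLp, fourierCoeff_mul_fourierLp, zero_sub]
  rw [← hg, ← hφ, ← hRpos.inner_left_eq_inner_right, inner_conj_symm]

/-- If `R_H` is bounded and positive (`⟨R_H x, x⟩ ≥ 0` for all `x`),
then `f ≥ 0` a.e., `ψ ≥ 0` a.e., and `g - φ̄ ∈ H²`. -/
theorem gsio_positive (f g φ ψ : 𝕋 → ℂ)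
    (hf : MemLp f 2 μ) (hg : MemLp g 2 μ) (hφ : MemLp φ 2 μ) (hψ : MemLp ψ 2 μ)
    (R : L2 →L[ℂ] L2) (hR : IsGSIO R f g φ ψ)
    (hpos : ∀ x : L2, 0 ≤ (inner ℂ (R x) x : ℂ)) :
    (∀ᵐ t ∂μ, 0 ≤ f t) ∧ (∀ᵐ t ∂μ, 0 ≤ ψ t) ∧
      ∃ hc : MemLp (g - star φ) 2 μ, hc.toLp (g - star φ) ∈ H2 := by
  have hRpos : R.IsPositive := ContinuousLinearMap.isPositive_of_inner_nonneg hpos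
  refine ⟨ae_nonneg_of_fejerSum_nonneg hf (hR.fejerSum_f_nonneg hRpos (hf.integrable one_le_two)),
    ae_nonneg_of_fejerSum_nonneg hψ (hR.fejerSum_ψ_nonneg hRpos (hψ.integrable one_le_two)),
    hg.sub hφ.star, mem_H2_of_fourierCoeff fun n hn => ?_⟩
  rw [fourierCoeff_congr_ae (MemLp.coeFn_toLp _),
    fourierCoeff_sub (hg.integrable one_le_two) (hφ.star.integrable one_le_two), Pi.sub_apply,
    fourierCoeff_star, hR.fourierCoeff_g_eq_conj_φ hRpos hn, sub_self]

end GSIO
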